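/- Let Σ be a triangulation of a polyhedron P ⊆ ℝⁿ, let Q ⊆ P be a polyhedron, and suppose Σ_Q := {σ ∈ Σ : σ ⊆ Q} triangulates Q. Put C := cl(P \ Q) and Σ* := {σ ∈ Σ : there exists τ ∈ Σ with τ ⊄ Q and σ a face of τ}. Then {σ ∈ Σ : σ ⊆ C} = Σ*. -/

import Mathlib

/-!
If `x` is an interior point of a simplex `t ∈ K` and `x` lies in another simplex `s ∈ K`, then
`t ∩ s` is a face of `t` containing an interior point, hence all of `t`, so `t` is a face of `s`.
Thus a simplex `t ⊄ Q` has its interior outside `Q` (which is covered by simplices inside `Q`),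
and `t`, the closure of its interior, lies in `cl (P \ Q)`. Conversely `cl (P \ Q)` is covered
by the closed simplices not contained in `Q`; one of them contains an interior point of a simplex
`s ⊆ cl (P \ Q)`, and `s` is a face of it. The vertex set of a simplex is the set of its extreme
points, so "interior point" does not depend on how the simplex is presented.
-/

open Set

/-- A polytope in ℝⁿ: the convex hull of a finite set of points. -/
def IsPolytope {n : ℕ} (s : Set (Fin n → ℝ)) : Prop :=
  ∃ V : Finset (Fin n → ℝ), s = convexHull ℝ (V : Set (Fin n → ℝ))

/-- A polyhedron in ℝⁿ: a finite union of polytopes. -/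
def IsPolyhedron {n : ℕ} (P : Set (Fin n → ℝ)) : Prop :=
  ∃ S : Set (Set (Fin n → ℝ)), S.Finite ∧ (∀ s ∈ S, IsPolytope s) ∧ P = ⋃₀ S

/-- A simplex in ℝⁿ: the convex hull of a nonempty finite affinely independent set. -/
def IsSimplex {n : ℕ} (s : Set (Fin n → ℝ)) : Prop :=
  ∃ V : Finset (Fin n → ℝ), V.Nonempty ∧
    AffineIndependent ℝ (fun x : {x : Fin n → ℝ // x ∈ V} => x.val) ∧
    s = convexHull ℝ (V : Set (Fin n → ℝ))

/-- `IsFaceOf s t`: `t` is a simplex with vertex set `W` and `s` is the convex hull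
of a nonempty subset of `W`. -/
def IsFaceOf {n : ℕ} (s t : Set (Fin n → ℝ)) : Prop :=
  ∃ W V : Finset (Fin n → ℝ), W.Nonempty ∧
    AffineIndependent ℝ (fun x : {x : Fin n → ℝ // x ∈ W} => x.val) ∧
    t = convexHull ℝ (W : Set (Fin n → ℝ)) ∧
    V.Nonempty ∧ V ⊆ W ∧ s = convexHull ℝ (V : Set (Fin n → ℝ))

/-- A triangulation in ℝⁿ: a finite set of simplices closed under taking faces, such that
any two members intersect in a common face (or not at all). -/
structure IsTriangulation {n : ℕ} (K : Set (Set (Fin n → ℝ))) : Prop where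
  finite : K.Finite
  simplex : ∀ s ∈ K, IsSimplex s
  face_mem : ∀ s ∈ K, ∀ t, IsFaceOf t s → t ∈ K
  inter : ∀ s ∈ K, ∀ t ∈ K, s ∩ t = ∅ ∨ (IsFaceOf (s ∩ t) s ∧ IsFaceOf (s ∩ t) t)

/-- A set of simplices closed under taking faces. -/
def FaceClosed {n : ℕ} (D : Set (Set (Fin n → ℝ))) : Prop :=
  ∀ s ∈ D, ∀ t, IsFaceOf t s → t ∈ D

/-- A `K`-definable polyhedron: the union of a face-closed subset of `K`. -/
def SigmaDefinable {n : ℕ} (K : Set (Set (Fin n → ℝ))) (C : Set (Fin n → ℝ)) : Prop :=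
  ∃ D ⊆ K, FaceClosed D ∧ C = ⋃₀ D

/-- A `K`-definable open set: the complement in `|K| = ⋃₀ K` of a `K`-definable polyhedron. -/
def SigmaDefOpen {n : ℕ} (K : Set (Set (Fin n → ℝ))) (O : Set (Fin n → ℝ)) : Prop :=
  ∃ C, SigmaDefinable K C ∧ O = ⋃₀ K \ C

/-- The open star of a simplex `s` in a triangulation `K`. -/
def openStar {n : ℕ} (K : Set (Set (Fin n → ℝ))) (s : Set (Fin n → ℝ)) : Set (Fin n → ℝ) :=
  ⋃ t ∈ {t ∈ K | s ⊆ t}, intrinsicInterior ℝ t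

/-- The interior of `S` in the subspace topology of `P`, viewed as a subset of ℝⁿ. -/
def intSub {n : ℕ} (P S : Set (Fin n → ℝ)) : Set (Fin n → ℝ) :=
  Subtype.val '' interior (Subtype.val ⁻¹' S : Set P)

/-- An open subpolyhedron of a polyhedron `P`: a subset of `P` whose complement in `P`
is a polyhedron. -/
def IsOpenSubpoly {n : ℕ} (P O : Set (Fin n → ℝ)) : Prop :=
  O ⊆ P ∧ IsPolyhedron (P \ O)

/-- `s` is a simplex with exactly `k` (affinely independent) vertices. -/
def SimplexWithCard {n : ℕ} (s : Set (Fin n → ℝ)) (k : ℕ) : Prop :=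
  ∃ V : Finset (Fin n → ℝ), V.Nonempty ∧
    AffineIndependent ℝ (fun x : {x : Fin n → ℝ // x ∈ V} => x.val) ∧
    s = convexHull ℝ (V : Set (Fin n → ℝ)) ∧ V.card = k

/-- `P` contains a simplex with `d+1` affinely independent vertices, and no simplex with more;
i.e. the polyhedron `P` has dimension exactly `d`. -/
def PolyDimEq {n : ℕ} (P : Set (Fin n → ℝ)) (d : ℕ) : Prop :=
  (∃ V : Finset (Fin n → ℝ), V.Nonempty ∧
      AffineIndependent ℝ (fun x : {x : Fin n → ℝ // x ∈ V} => x.val) ∧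
      convexHull ℝ (V : Set (Fin n → ℝ)) ⊆ P ∧ V.card = d + 1) ∧
  (∀ V : Finset (Fin n → ℝ),
      AffineIndependent ℝ (fun x : {x : Fin n → ℝ // x ∈ V} => x.val) →
      convexHull ℝ (V : Set (Fin n → ℝ)) ⊆ P → V.card ≤ d + 1)

/-- The polyhedron `P` has dimension at most `d`. -/
def PolyDimLE {n : ℕ} (P : Set (Fin n → ℝ)) (d : ℕ) : Prop :=
  ∀ V : Finset (Fin n → ℝ),
    AffineIndependent ℝ (fun x : {x : Fin n → ℝ // x ∈ V} => x.val) →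
    convexHull ℝ (V : Set (Fin n → ℝ)) ⊆ P → V.card ≤ d + 1

/-- The triangulation `K` has combinatorial dimension exactly `d`. -/
def TriangDimEq {n : ℕ} (K : Set (Set (Fin n → ℝ))) (d : ℕ) : Prop :=
  (∃ s ∈ K, SimplexWithCard s (d + 1)) ∧
  (∀ s ∈ K, ∀ k, SimplexWithCard s k → k ≤ d + 1)

/-- The bounded-depth terms: `bdTerm P k V = V k ∪ (V k ⇨ bdTerm P (k-1) V)`,
where `U ⇨ W = int_P ((P \ U) ∪ W)` is the Heyting implication of open subsets of `P`. -/
def bdTerm {n : ℕ} (P : Set (Fin n → ℝ)) :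
    (k : ℕ) → (Fin (k + 1) → Set (Fin n → ℝ)) → Set (Fin n → ℝ)
  | 0, V => V 0 ∪ intSub P (P \ V 0)
  | k + 1, V => V (Fin.last (k + 1)) ∪
      intSub P ((P \ V (Fin.last (k + 1))) ∪ bdTerm P k (fun i => V i.castSucc))

/-- The finite poset `A` has depth exactly `d`: it has a chain of cardinality `d+1`
and no longer chain. -/
def depthEq (A : Type) [PartialOrder A] (d : ℕ) : Prop :=
  (∃ C : Finset A, IsChain (· ≤ ·) (C : Set A) ∧ C.card = d + 1) ∧
  (∀ C : Finset A, IsChain (· ≤ ·) (C : Set A) → C.card ≤ d + 1)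

/-- An upper set of the poset `(K, ⊆)`. -/
def UpperSetOf {n : ℕ} (K U : Set (Set (Fin n → ℝ))) : Prop :=
  U ⊆ K ∧ ∀ s ∈ U, ∀ t ∈ K, s ⊆ t → t ∈ U

/-- The map sending an upper set of a triangulation to the union of the relative
interiors of its members. -/
def gammaUp {n : ℕ} (U : Set (Set (Fin n → ℝ))) : Set (Fin n → ℝ) :=
  ⋃ s ∈ U, intrinsicInterior ℝ s

section OpenSimplex

variable {𝕜 E : Type*} [Field 𝕜] [LinearOrder 𝕜] [IsStrictOrderedRing 𝕜]
  [AddCommGroup E] [Module 𝕜 E] {V W : Finset E} {x y : E}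

variable (𝕜) in
/-- For affinely independent `W`, the relative interior of the simplex `convexHull 𝕜 W`. -/
def openSimplex (W : Finset E) : Set E :=
  {x | ∃ w : E → 𝕜, (∀ y ∈ W, 0 < w y) ∧ ∑ y ∈ W, w y = 1 ∧ ∑ y ∈ W, w y • y = x}

lemma openSimplex_subset_convexHull : openSimplex 𝕜 W ⊆ convexHull 𝕜 (W : Set E) := by
  rintro x ⟨w, hw₀, hw₁, rfl⟩
  exact Finset.mem_convexHull'.2 ⟨w, fun y hy => (hw₀ y hy).le, hw₁, rfl⟩

lemma openSimplex_nonempty (hW : W.Nonempty) : (openSimplex 𝕜 W).Nonempty := by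
  have hcard : (0 : 𝕜) < W.card := by exact_mod_cast hW.card_pos
  exact ⟨_, fun _ => (W.card : 𝕜)⁻¹, fun _ _ => inv_pos.2 hcard,
    by rw [Finset.sum_const, nsmul_eq_mul, mul_inv_cancel₀ hcard.ne'], rfl⟩

lemma openSegment_subset_openSimplex (hx : x ∈ convexHull 𝕜 (W : Set E))
    (hy : y ∈ openSimplex 𝕜 W) : openSegment 𝕜 x y ⊆ openSimplex 𝕜 W := by
  obtain ⟨a, ha₀, ha₁, rfl⟩ := Finset.mem_convexHull'.1 hx
  obtain ⟨b, hb₀, hb₁, rfl⟩ := hy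
  rintro _ ⟨α, β, hα, hβ, hαβ, rfl⟩
  refine ⟨fun u => α * a u + β * b u, fun u hu => ?_, ?_, ?_⟩
  · have := mul_nonneg hα.le (ha₀ u hu)
    have := mul_pos hβ (hb₀ u hu)
    linarith
  · rw [Finset.sum_add_distrib, ← Finset.mul_sum, ← Finset.mul_sum, ha₁, hb₁, mul_one, mul_one,
      hαβ]
  · simp_rw [add_smul, Finset.sum_add_distrib, mul_smul, ← Finset.smul_sum]

lemma exists_weights_of_mem_convexHull_of_subset (hVW : V ⊆ W)
    (hx : x ∈ convexHull 𝕜 (V : Set E)) :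
    ∃ w : E → 𝕜, (∀ y ∈ W, 0 ≤ w y) ∧ (∀ y ∈ W, y ∉ V → w y = 0) ∧
      ∑ y ∈ W, w y = 1 ∧ ∑ y ∈ W, w y • y = x := by
  classical
  obtain ⟨a, ha₀, ha₁, hax⟩ := Finset.mem_convexHull'.1 hx
  have hWV : W ∩ V = V := Finset.inter_eq_right.2 hVW
  refine ⟨fun y => if y ∈ V then a y else 0, fun y _ => ?_, fun y _ hy => if_neg hy, ?_, ?_⟩
  · dsimp only
    split_ifs with hy
    exacts [ha₀ y hy, le_rfl]
  · rw [Finset.sum_ite_mem, hWV, ha₁]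
  · simp_rw [ite_smul, zero_smul]
    rw [Finset.sum_ite_mem, hWV, hax]

lemma mem_convexHull_of_weights_eq_zero {w : E → 𝕜} (hVW : V ⊆ W) (hw₀ : ∀ y ∈ W, 0 ≤ w y)
    (hwV : ∀ y ∈ W, y ∉ V → w y = 0) (hw₁ : ∑ y ∈ W, w y = 1) (hwx : ∑ y ∈ W, w y • y = x) :
    x ∈ convexHull 𝕜 (V : Set E) := by
  refine Finset.mem_convexHull'.2 ⟨w, fun y hy => hw₀ y (hVW hy), ?_, ?_⟩
  · rwa [Finset.sum_subset hVW fun y hy hyV => hwV y hy hyV]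
  · rwa [Finset.sum_subset hVW fun y hy hyV => by rw [hwV y hy hyV, zero_smul]]

namespace AffineIndependent

theorem isExtreme_convexHull (hW : AffineIndependent 𝕜 ((↑) : W → E)) (hVW : V ⊆ W) :
    IsExtreme 𝕜 (convexHull 𝕜 (W : Set E)) (convexHull 𝕜 (V : Set E)) := by
  refine ⟨convexHull_mono (by exact_mod_cast hVW), fun x₁ hx₁ x₂ hx₂ z hz hzx => ?_⟩
  obtain ⟨a, ha₀, ha₁, rfl⟩ := Finset.mem_convexHull'.1 hx₁
  obtain ⟨b, hb₀, hb₁, rfl⟩ := Finset.mem_convexHull'.1 hx₂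
  obtain ⟨c, -, hcV, hc₁, rfl⟩ := exists_weights_of_mem_convexHull_of_subset hVW hz
  obtain ⟨α, β, hα, hβ, hαβ, hzx⟩ := hzx
  have hcoord : ∀ y ∈ W, α * a y + β * b y = c y := by
    refine hW.eq_of_sum_eq_sum_subtype ?_ ?_
    · rw [Finset.sum_add_distrib, ← Finset.mul_sum, ← Finset.mul_sum, ha₁, hb₁, hc₁, mul_one,
        mul_one, hαβ]
    · simp_rw [add_smul, Finset.sum_add_distrib, mul_smul, ← Finset.smul_sum, hzx]
  refine mem_convexHull_of_weights_eq_zero hVW ha₀ (fun y hy hyV => ?_) ha₁ rfl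
  have := hcoord y hy
  rw [hcV y hy hyV] at this
  nlinarith [mul_nonneg hβ.le (hb₀ y hy), ha₀ y hy]

theorem extremePoints_convexHull (hW : AffineIndependent 𝕜 ((↑) : W → E)) :
    (convexHull 𝕜 (W : Set E)).extremePoints 𝕜 = W := by
  refine extremePoints_convexHull_subset.antisymm fun w hw => isExtreme_singleton.1 ?_
  simpa using hW.isExtreme_convexHull (Finset.singleton_subset_iff.2 hw)

theorem eq_of_convexHull_eq (hW : AffineIndependent 𝕜 ((↑) : W → E))
    (hW' : AffineIndependent 𝕜 ((↑) : V → E))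
    (h : convexHull 𝕜 (W : Set E) = convexHull 𝕜 (V : Set E)) : W = V := by
  rw [← Finset.coe_inj, ← hW.extremePoints_convexHull, ← hW'.extremePoints_convexHull, h]

theorem subset_of_mem_openSimplex_of_mem_convexHull (hW : AffineIndependent 𝕜 ((↑) : W → E))
    (hVW : V ⊆ W) (hx : x ∈ openSimplex 𝕜 W) (hxV : x ∈ convexHull 𝕜 (V : Set E)) : W ⊆ V := by
  obtain ⟨p, hp₀, hp₁, rfl⟩ := hx
  obtain ⟨c, -, hcV, hc₁, hcx⟩ := exists_weights_of_mem_convexHull_of_subset hVW hxV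
  intro y hy
  by_contra hyV
  have := hW.eq_of_sum_eq_sum_subtype (hp₁.trans hc₁.symm) hcx.symm y hy
  exact (hp₀ y hy).ne' (this.trans (hcV y hy hyV))

end AffineIndependent

lemma convexHull_subset_closure_openSimplex [TopologicalSpace E] [Module ℝ E]
    [IsTopologicalAddGroup E] [ContinuousSMul ℝ E] (hW : W.Nonempty) :
    convexHull ℝ (W : Set E) ⊆ closure (openSimplex ℝ W) := by
  obtain ⟨y, hy⟩ := openSimplex_nonempty (𝕜 := ℝ) hW
  intro x hx
  exact segment_subset_closure_openSegment.trans (closure_mono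
    (openSegment_subset_openSimplex hx hy)) (left_mem_segment ℝ x y)

end OpenSimplex

section Triangulation

variable {n : ℕ} {K : Set (Set (Fin n → ℝ))} {s t Q : Set (Fin n → ℝ)}

lemma IsFaceOf.subset (h : IsFaceOf s t) : s ⊆ t := by
  obtain ⟨W, V, -, -, rfl, -, hVW, rfl⟩ := h
  exact convexHull_mono (by exact_mod_cast hVW)

lemma IsTriangulation.isFaceOf_of_mem_openSimplex (hK : IsTriangulation K) (ht : t ∈ K)
    (hs : s ∈ K) {W : Finset (Fin n → ℝ)}
    (hW : AffineIndependent ℝ ((↑) : W → Fin n → ℝ)) (htW : t = convexHull ℝ (W : Set _))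
    {x : Fin n → ℝ} (hx : x ∈ openSimplex ℝ W) (hxs : x ∈ s) : IsFaceOf t s := by
  have hxt : x ∈ t := htW ▸ openSimplex_subset_convexHull hx
  rcases hK.inter t ht s hs with hempty | ⟨⟨W', V', -, hW', htW', -, hVW', hts⟩, hface⟩
  · exact (Set.eq_empty_iff_forall_notMem.1 hempty x ⟨hxt, hxs⟩).elim
  obtain rfl : W = W' := hW.eq_of_convexHull_eq hW' (htW ▸ htW')
  have hWV' := hW.subset_of_mem_openSimplex_of_mem_convexHull hVW' hx (hts ▸ ⟨hxt, hxs⟩)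
  have : t ∩ s = t := Set.inter_subset_left.antisymm <| calc
    t = convexHull ℝ (W : Set _) := htW
    _ ⊆ convexHull ℝ (V' : Set _) := convexHull_mono (by exact_mod_cast hWV')
    _ = t ∩ s := hts.symm
  rwa [this] at hface

lemma IsTriangulation.subset_closure_sdiff (hK : IsTriangulation K)
    (hQ : Q ⊆ ⋃₀ {s ∈ K | s ⊆ Q}) (ht : t ∈ K) (htQ : ¬ t ⊆ Q) :
    t ⊆ closure (⋃₀ K \ Q) := by
  obtain ⟨W, hWne, hW, rfl⟩ := hK.simplex t ht
  refine (convexHull_subset_closure_openSimplex hWne).trans (closure_mono fun x hx => ?_)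
  refine ⟨⟨_, ht, openSimplex_subset_convexHull hx⟩, fun hxQ => ?_⟩
  obtain ⟨s, ⟨hs, hsQ⟩, hxs⟩ := hQ hxQ
  exact htQ ((hK.isFaceOf_of_mem_openSimplex ht hs hW rfl hx hxs).subset.trans hsQ)

lemma IsTriangulation.closure_sdiff_subset (hK : IsTriangulation K) :
    closure (⋃₀ K \ Q) ⊆ ⋃₀ {t ∈ K | ¬ t ⊆ Q} := by
  refine closure_minimal (fun x ⟨⟨t, ht, hxt⟩, hxQ⟩ => ⟨t, ⟨ht, fun h => hxQ (h hxt)⟩, hxt⟩) ?_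
  rw [Set.sUnion_eq_biUnion]
  refine (hK.finite.subset (Set.sep_subset _ _)).isClosed_biUnion fun t ⟨ht, _⟩ => ?_
  obtain ⟨W, -, -, rfl⟩ := hK.simplex t ht
  exact W.finite_toSet.isClosed_convexHull (𝕜 := ℝ)

end Triangulation

theorem simplices_in_closure_diff_general {n : ℕ} (K : Set (Set (Fin n → ℝ)))
    (hK : IsTriangulation K)
    (P Q : Set (Fin n → ℝ)) (hP : ⋃₀ K = P)
    (hQ : ⋃₀ {s ∈ K | s ⊆ Q} = Q) :
    {s ∈ K | s ⊆ closure (P \ Q)} = {s ∈ K | ∃ t ∈ K, ¬ t ⊆ Q ∧ IsFaceOf s t} := by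
  subst hP
  ext s
  refine ⟨fun ⟨hs, hsC⟩ => ⟨hs, ?_⟩, fun ⟨hs, t, ht, htQ, hst⟩ => ⟨hs, ?_⟩⟩
  · obtain ⟨W, hWne, hW, rfl⟩ := hK.simplex s hs
    obtain ⟨x, hx⟩ := openSimplex_nonempty (𝕜 := ℝ) hWne
    obtain ⟨t, ⟨ht, htQ⟩, hxt⟩ :=
      hK.closure_sdiff_subset (hsC (openSimplex_subset_convexHull hx))
    exact ⟨t, ht, htQ, hK.isFaceOf_of_mem_openSimplex hs ht hW rfl hx hxt⟩
  · exact hst.subset.trans (hK.subset_closure_sdiff hQ.ge ht htQ)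

/-- Let `K` triangulate the polyhedron `P`, let `Q ⊆ P` be a polyhedron
triangulated by `{s ∈ K : s ⊆ Q}`, and put `C := cl (P \ Q)`.  Then the simplices of `K`
contained in `C` are exactly the faces of simplices of `K` not contained in `Q`. -/
theorem simplices_in_closure_diff {n : ℕ} (K : Set (Set (Fin n → ℝ)))
    (hK : IsTriangulation K)
    (P Q : Set (Fin n → ℝ)) (hP : ⋃₀ K = P)
    (hQpoly : IsPolyhedron Q) (hQP : Q ⊆ P)
    (hQ : ⋃₀ {s ∈ K | s ⊆ Q} = Q) :
    {s ∈ K | s ⊆ closure (P \ Q)} = {s ∈ K | ∃ t ∈ K, ¬ t ⊆ Q ∧ IsFaceOf s t} :=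
  simplices_in_closure_diff_general K hK P Q hP hQ
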